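/- Let X and Y be integrable random variables with left-continuous quantile functions F_X^{-1}, F_Y^{-1} on (0,1). Then E R_k(X) = E R_k(Y) for all k ≥ 1 if and only if the function h(u) = F_X^{-1}(u) − F_Y^{-1}(u) satisfies h(u) = h(1−u) for almost every u ∈ (0,1). -/

import Mathlib

/-!
By linearity both sides only involve `h = F_X⁻¹ - F_Y⁻¹`, integrable on `(0,1)` because a quantile
function pushes the uniform distribution on `(0,1)` forward to the law it comes from. Substituting
`u ↦ 1 - u` in the term `(1 - u)ⁿ h(u)` turns the `k = n + 1` condition into
`∫₀¹ uⁿ (h(u) - h(1 - u)) du = 0`. So the conditions for all `k` say that every moment of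
`u ↦ h(u) - h(1 - u)` vanishes, and by the Weierstrass approximation theorem an integrable function
on a bounded interval with vanishing moments is zero almost everywhere.
-/

open MeasureTheory ProbabilityTheory Set Filter Polynomial

lemma Real.volume_Ioo_zero_one_inter_Iic {c : ℝ} (hc : c ≤ 1) :
    volume (Ioo 0 1 ∩ Iic c) = ENNReal.ofReal c := by
  rw [measure_congr ((Ioo_ae_eq_Ioc (μ := volume)).inter (ae_eq_refl (Iic c))), Ioc_inter_Iic,
    inf_eq_right.2 hc, Real.volume_Ioc, sub_zero]

namespace ProbabilityTheory

/-- The left-continuous quantile function; its values outside `(0,1)` are junk. -/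
noncomputable def quantile (μ : Measure ℝ) (u : ℝ) : ℝ :=
  sInf {x : ℝ | u ≤ cdf μ x}

variable (μ : Measure ℝ)

lemma nonempty_setOf_le_cdf {u : ℝ} (hu : u < 1) : {x : ℝ | u ≤ cdf μ x}.Nonempty :=
  ((tendsto_cdf_atTop μ).eventually (eventually_ge_nhds hu)).exists

lemma bddBelow_setOf_le_cdf {u : ℝ} (hu : 0 < u) : BddBelow {x : ℝ | u ≤ cdf μ x} := by
  obtain ⟨x, hx⟩ := ((tendsto_cdf_atBot μ).eventually (eventually_lt_nhds hu)).exists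
  refine ⟨x, fun y hy => ?_⟩
  by_contra! hyx
  exact (hy.trans (monotone_cdf μ hyx.le)).not_gt hx

lemma quantile_le_iff {u : ℝ} (hu : u ∈ Ioo (0 : ℝ) 1) (x : ℝ) :
    quantile μ u ≤ x ↔ u ≤ cdf μ x := by
  refine ⟨fun h => ?_, fun h => csInf_le (bddBelow_setOf_le_cdf μ hu.1) h⟩
  have hright : ∀ y ∈ Ioi x, u ≤ cdf μ y := fun y hy => by
    obtain ⟨z, hz, hzy⟩ := (csInf_lt_iff (bddBelow_setOf_le_cdf μ hu.1)
      (nonempty_setOf_le_cdf μ hu.2)).1 (h.trans_lt hy)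
    exact hz.trans (monotone_cdf μ hzy.le)
  exact ge_of_tendsto ((cdf μ).right_continuous x |>.mono_left
    (nhdsWithin_mono x Ioi_subset_Ici_self)) (eventually_nhdsWithin_of_forall hright)

lemma monotoneOn_quantile : MonotoneOn (quantile μ) (Ioo 0 1) := fun _ hu _ hv huv =>
  csInf_le_csInf (bddBelow_setOf_le_cdf μ hu.1) (nonempty_setOf_le_cdf μ hv.2)
    fun _ hx => huv.trans hx

lemma aemeasurable_quantile : AEMeasurable (quantile μ) (volume.restrict (Ioo 0 1)) :=
  aemeasurable_restrict_of_monotoneOn measurableSet_Ioo (monotoneOn_quantile μ)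

lemma map_quantile [IsProbabilityMeasure μ] :
    (volume.restrict (Ioo 0 1)).map (quantile μ) = μ := by
  refine Measure.ext_of_Iic _ _ fun x => ?_
  rw [Measure.map_apply_of_aemeasurable (aemeasurable_quantile μ) measurableSet_Iic,
    Measure.restrict_apply' measurableSet_Ioo, inter_comm,
    ← ofReal_cdf, ← Real.volume_Ioo_zero_one_inter_Iic (cdf_le_one μ x)]
  congr 1
  ext u
  simp only [mem_inter_iff, mem_preimage, mem_Iic]
  exact and_congr_right fun hu => quantile_le_iff μ hu x

lemma quantile_eq_sInf_toReal [IsProbabilityMeasure μ] (u : ℝ) :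
    quantile μ u = sInf {x | u ≤ (μ (Iic x)).toReal} := by
  simp only [quantile, cdf_eq_real, measureReal_def]

lemma integrableOn_quantile [IsProbabilityMeasure μ] (h : Integrable id μ) :
    IntegrableOn (quantile μ) (Ioo 0 1) := by
  rw [← map_quantile μ] at h
  exact (integrable_map_measure h.aestronglyMeasurable (aemeasurable_quantile μ)).1 h

end ProbabilityTheory

lemma setIntegral_Ioo_comp_one_sub (f : ℝ → ℝ) :
    ∫ u in Ioo (0 : ℝ) 1, f (1 - u) = ∫ u in Ioo (0 : ℝ) 1, f u := by
  simp only [← integral_Ioc_eq_integral_Ioo, ← intervalIntegral.integral_of_le zero_le_one,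
    intervalIntegral.integral_comp_sub_left, sub_self, sub_zero]

lemma MeasureTheory.IntegrableOn.comp_one_sub {f : ℝ → ℝ} (hf : IntegrableOn f (Ioo 0 1)) :
    IntegrableOn (fun u => f (1 - u)) (Ioo 0 1) := by
  rw [← integrableOn_Icc_iff_integrableOn_Ioo, ← intervalIntegrable_iff_integrableOn_Icc_of_le
    zero_le_one] at hf ⊢
  simpa using (hf.comp_sub_left 1).symm

lemma MeasureTheory.IntegrableOn.continuous_mul_Ioo {φ f : ℝ → ℝ} {a b : ℝ} (hφ : Continuous φ)
    (hf : IntegrableOn f (Ioo a b)) : IntegrableOn (fun x => φ x * f x) (Ioo a b) :=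
  hf.continuousOn_mul_of_subset hφ.continuousOn isCompact_Icc measurableSet_Ioo Ioo_subset_Icc_self

lemma setIntegral_Ioo_eval_mul_eq_zero {f : ℝ → ℝ} {a b : ℝ} (hf : IntegrableOn f (Ioo a b))
    (hmom : ∀ n : ℕ, ∫ x in Ioo a b, x ^ n * f x = 0) (p : ℝ[X]) :
    ∫ x in Ioo a b, p.eval x * f x = 0 := by
  induction p using Polynomial.induction_on' with
  | add p q hp hq =>
    simp only [eval_add, add_mul]
    rw [integral_add (hf.continuous_mul_Ioo p.continuous) (hf.continuous_mul_Ioo q.continuous),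
      hp, hq, add_zero]
  | monomial n c =>
    simp only [eval_monomial, mul_assoc]
    rw [integral_const_mul, hmom, mul_zero]

lemma setIntegral_Ioo_mul_eq_zero_of_forall_pow_mul {f g : ℝ → ℝ} {a b : ℝ}
    (hf : IntegrableOn f (Ioo a b)) (hmom : ∀ n : ℕ, ∫ x in Ioo a b, x ^ n * f x = 0)
    (hg : Continuous g) : ∫ x in Ioo a b, g x * f x = 0 := by
  set C := ∫ x in Ioo a b, |f x|
  have hC : 0 ≤ C := setIntegral_nonneg measurableSet_Ioo fun _ _ => abs_nonneg _
  refine abs_nonpos_iff.1 (le_of_forall_pos_le_add fun ε hε => ?_)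
  obtain ⟨p, hp⟩ := exists_polynomial_near_of_continuousOn a b g hg.continuousOn (ε / (C + 1))
    (by positivity)
  have hnear : ∀ᵐ x ∂volume.restrict (Ioo a b),
      ‖(g x - p.eval x) * f x‖ ≤ ε / (C + 1) * |f x| := by
    filter_upwards [ae_restrict_mem measurableSet_Ioo] with x hx
    rw [Real.norm_eq_abs, abs_mul, abs_sub_comm]
    gcongr
    exact (hp x (Ioo_subset_Icc_self hx)).le
  calc |∫ x in Ioo a b, g x * f x|
      = |∫ x in Ioo a b, (g x - p.eval x) * f x| := by
        simp only [sub_mul]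
        rw [integral_sub (hf.continuous_mul_Ioo hg) (hf.continuous_mul_Ioo p.continuous),
          setIntegral_Ioo_eval_mul_eq_zero hf hmom, sub_zero]
    _ ≤ ∫ x in Ioo a b, ε / (C + 1) * |f x| :=
        norm_integral_le_of_norm_le (hf.abs.const_mul _) hnear
    _ = ε * (C / (C + 1)) := by rw [integral_const_mul]; ring
    _ ≤ 0 + ε := by
        rw [zero_add]
        exact mul_le_of_le_one_right hε.le ((div_le_one (by positivity)).2 (by linarith))

theorem ae_eq_zero_of_forall_setIntegral_Ioo_pow_mul_eq_zero {f : ℝ → ℝ} {a b : ℝ}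
    (hf : IntegrableOn f (Ioo a b)) (hmom : ∀ n : ℕ, ∫ x in Ioo a b, x ^ n * f x = 0) :
    ∀ᵐ x ∂volume.restrict (Ioo a b), f x = 0 := by
  rw [ae_restrict_iff' measurableSet_Ioo]
  refine isOpen_Ioo.ae_eq_zero_of_integral_contDiff_smul_eq_zero hf.locallyIntegrableOn
    fun g hg _ hsupp => ?_
  rw [← setIntegral_eq_integral_of_forall_compl_eq_zero fun x hx => by
    rw [image_eq_zero_of_notMem_tsupport fun h => hx (hsupp h), zero_smul]]
  exact setIntegral_Ioo_mul_eq_zero_of_forall_pow_mul hf hmom hg.continuous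

theorem forall_setIntegral_pow_sub_one_sub_pow_mul_eq_zero_iff {h : ℝ → ℝ}
    (hh : IntegrableOn h (Ioo 0 1)) :
    (∀ n : ℕ, ∫ u in Ioo (0 : ℝ) 1, (u ^ n - (1 - u) ^ n) * h u = 0) ↔
      ∀ᵐ u ∂volume.restrict (Ioo (0 : ℝ) 1), h u = h (1 - u) := by
  have hreflect : ∀ n : ℕ, ∫ u in Ioo (0 : ℝ) 1, (u ^ n - (1 - u) ^ n) * h u
      = ∫ u in Ioo (0 : ℝ) 1, u ^ n * (h u - h (1 - u)) := by
    intro n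
    have hsub : ∫ u in Ioo (0 : ℝ) 1, (1 - u) ^ n * h u
        = ∫ u in Ioo (0 : ℝ) 1, u ^ n * h (1 - u) := by
      simpa only [sub_sub_cancel] using
        (setIntegral_Ioo_comp_one_sub fun u => (1 - u) ^ n * h u).symm
    simp only [sub_mul, mul_sub]
    rw [integral_sub (hh.continuous_mul_Ioo (continuous_pow n)) (hh.continuous_mul_Ioo
      (by fun_prop)), hsub, integral_sub (hh.continuous_mul_Ioo (continuous_pow n))
      (hh.comp_one_sub.continuous_mul_Ioo (continuous_pow n))]
  simp only [hreflect]
  refine ⟨fun hmom => ?_, fun hsymm n => integral_eq_zero_of_ae ?_⟩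
  · filter_upwards [ae_eq_zero_of_forall_setIntegral_Ioo_pow_mul_eq_zero
      (hh.sub hh.comp_one_sub) hmom] with u hu
    exact sub_eq_zero.1 hu
  · filter_upwards [hsymm] with u hu
    simp [hu]

theorem stmt_18 (P Q : Measure ℝ) [IsProbabilityMeasure P] [IsProbabilityMeasure Q]
    (hP : Integrable id P) (hQ : Integrable id Q)
    (FX FY QX QY : ℝ → ℝ)
    (hFX : ∀ x, FX x = (P (Set.Iic x)).toReal)
    (hFY : ∀ x, FY x = (Q (Set.Iic x)).toReal)
    (hQX : ∀ u ∈ Set.Ioo (0 : ℝ) 1, QX u = sInf {x : ℝ | u ≤ FX x})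
    (hQY : ∀ u ∈ Set.Ioo (0 : ℝ) 1, QY u = sInf {x : ℝ | u ≤ FY x}) :
    (∀ k : ℕ, 1 ≤ k →
        (k : ℝ) * ∫ u in Set.Ioo (0 : ℝ) 1, (u ^ (k - 1) - (1 - u) ^ (k - 1)) * QX u
          = (k : ℝ) * ∫ u in Set.Ioo (0 : ℝ) 1, (u ^ (k - 1) - (1 - u) ^ (k - 1)) * QY u)
      ↔ (∀ᵐ u ∂(volume.restrict (Set.Ioo (0 : ℝ) 1)),
          QX u - QY u = QX (1 - u) - QY (1 - u)) := by
  have hX : IntegrableOn QX (Ioo 0 1) := (integrableOn_quantile P hP).congr_fun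
    (fun u hu => by simp only [hQX u hu, hFX, quantile_eq_sInf_toReal]) measurableSet_Ioo
  have hY : IntegrableOn QY (Ioo 0 1) := (integrableOn_quantile Q hQ).congr_fun
    (fun u hu => by simp only [hQY u hu, hFY, quantile_eq_sInf_toReal]) measurableSet_Ioo
  have hsplit : ∀ n : ℕ, ∫ u in Ioo (0 : ℝ) 1, (u ^ n - (1 - u) ^ n) * (QX u - QY u)
      = (∫ u in Ioo (0 : ℝ) 1, (u ^ n - (1 - u) ^ n) * QX u)
        - ∫ u in Ioo (0 : ℝ) 1, (u ^ n - (1 - u) ^ n) * QY u := fun n => by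
    simp only [mul_sub]
    exact integral_sub (hX.continuous_mul_Ioo (by fun_prop)) (hY.continuous_mul_Ioo (by fun_prop))
  rw [← forall_setIntegral_pow_sub_one_sub_pow_mul_eq_zero_iff (h := fun u => QX u - QY u)
    (hX.sub hY)]
  simp only [hsplit, sub_eq_zero]
  refine ⟨fun h n => ?_, fun h k _ => by rw [h]⟩
  simpa [Nat.cast_add_one_ne_zero] using h (n + 1) (Nat.le_add_left 1 n)
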